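/- arXiv:2204.05416 — 2 statements merged into one kernel-verified Lean document; each statement's English description precedes it below -/
import Mathlib

section
/- Let Ω be the open unit ball of ℝⁿ and define ū(x) = (3/4)(2/n)^{1/3}(1 − |x|^{4/3}) and a(x) = (1/2)(2/n)^{2/3}|x|^{2/3}. Then a(x) = |∇ū(x)|²/2 for x ≠ 0, and the pair satisfies −div(a ∇ū) = 1 in the sense of distributions on Ω; equivalently, −Δ₄ū = 2 where Δ₄ū = div(|∇ū|²∇ū). -/
open MeasureTheory RealInnerProductSpace

section Aux

variable {m : ℕ}

local notation "E'" => EuclideanSpace ℝ (Fin m)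

lemma aux_gradient_inner (f : E' → ℝ) (x v : E') :
    ⟪gradient f x, v⟫ = fderiv ℝ f x v :=
  InnerProductSpace.toDual_symm_apply

/-- The gradient of `x ↦ (3/4) c (1 - ‖x‖^{4/3})` at `x ≠ 0`. -/
lemma aux_hasGradientAt (c : ℝ) {x : E'} (hx : x ≠ 0) :
    HasGradientAt (fun y : E' => (3 / 4) * c * (1 - ‖y‖ ^ ((4 : ℝ) / 3)))
      ((-(c * ‖x‖ ^ (-(2 : ℝ) / 3))) • x) x := by
  have hxn : (0 : ℝ) < ‖x‖ := norm_pos_iff.2 hx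
  have hx2 : (0 : ℝ) < ‖x‖ ^ 2 := by positivity
  have hq : HasFDerivAt (fun y : E' => ‖y‖ ^ 2) (2 • innerSL ℝ x) x :=
    (hasStrictFDerivAt_norm_sq x).hasFDerivAt
  have hr : HasDerivAt (fun t : ℝ => t ^ ((2 : ℝ) / 3))
      (((2 : ℝ) / 3) * (‖x‖ ^ 2) ^ ((2 : ℝ) / 3 - 1)) (‖x‖ ^ 2) :=
    Real.hasDerivAt_rpow_const (Or.inl hx2.ne')
  have hcomp : HasFDerivAt (fun y : E' => (‖y‖ ^ 2) ^ ((2 : ℝ) / 3))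
      ((((2 : ℝ) / 3) * (‖x‖ ^ 2) ^ ((2 : ℝ) / 3 - 1)) • (2 • innerSL ℝ x)) x :=
    by have := hr.comp_hasFDerivAt x hq; exact this
  have hueq : (fun y : E' => (3 / 4) * c * (1 - ‖y‖ ^ ((4 : ℝ) / 3))) =
      fun y : E' => (3 / 4) * c - (3 / 4) * c * ((‖y‖ ^ 2) ^ ((2 : ℝ) / 3)) := by
    funext y
    have h1 : ((‖y‖ ^ 2 : ℝ)) ^ ((2 : ℝ) / 3) = ‖y‖ ^ ((4 : ℝ) / 3) := by
      rw [← Real.rpow_natCast ‖y‖ 2, ← Real.rpow_mul (norm_nonneg y)]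
      norm_num
    rw [h1]; ring
  have hfd : HasFDerivAt (fun y : E' => (3 / 4) * c * (1 - ‖y‖ ^ ((4 : ℝ) / 3)))
      ((0 : E' →L[ℝ] ℝ) - ((3 / 4) * c) •
        ((((2 : ℝ) / 3) * (‖x‖ ^ 2) ^ ((2 : ℝ) / 3 - 1)) • (2 • innerSL ℝ x))) x := by
    rw [hueq]
    exact (hasFDerivAt_const ((3 : ℝ) / 4 * c) x).sub (hcomp.const_mul ((3 / 4) * c))
  have key : InnerProductSpace.toDual ℝ E' ((-(c * ‖x‖ ^ (-(2 : ℝ) / 3))) • x) =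
      (0 : E' →L[ℝ] ℝ) - ((3 / 4) * c) •
        ((((2 : ℝ) / 3) * (‖x‖ ^ 2) ^ ((2 : ℝ) / 3 - 1)) • (2 • innerSL ℝ x)) := by
    ext v
    have h2 : ((‖x‖ ^ 2 : ℝ)) ^ ((2 : ℝ) / 3 - 1) = ‖x‖ ^ (-(2 : ℝ) / 3) := by
      rw [← Real.rpow_natCast ‖x‖ 2, ← Real.rpow_mul (norm_nonneg x)]
      norm_num
    simp only [InnerProductSpace.toDual_apply_apply, ContinuousLinearMap.sub_apply,
      ContinuousLinearMap.zero_apply, ContinuousLinearMap.smul_apply, innerSL_apply_apply, h2,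
      real_inner_smul_left, smul_eq_mul]
    ring
  have h3 : (InnerProductSpace.toDual ℝ E').symm
      ((0 : E' →L[ℝ] ℝ) - ((3 / 4) * c) •
        ((((2 : ℝ) / 3) * (‖x‖ ^ 2) ^ ((2 : ℝ) / 3 - 1)) • (2 • innerSL ℝ x))) =
      (-(c * ‖x‖ ^ (-(2 : ℝ) / 3))) • x := by
    have h := congrArg (InnerProductSpace.toDual ℝ E').symm key
    rw [LinearIsometryEquiv.symm_apply_apply] at h
    exact h.symm
  rw [← h3]
  exact hfd.hasGradientAt

lemma aux_ibp (φ : E' → ℝ) (hφ : ContDiff ℝ (⊤ : ℕ∞) φ) (hφc : HasCompactSupport φ) :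
    ∫ x : E', fderiv ℝ φ x x = -(m : ℝ) * ∫ x : E', φ x := by
  have hφd : Differentiable ℝ φ := hφ.differentiable (by simp)
  have hfdc : Continuous (fderiv ℝ φ) := hφ.continuous_fderiv (by simp)
  have hfd0 : ∀ x : E', x ∉ tsupport φ → fderiv ℝ φ x = 0 := by
    intro x hx
    by_contra h
    exact hx (support_fderiv_subset ℝ (f := φ) h)
  have hint : ∀ i : Fin m, Integrable
      (fun x : E' => (EuclideanSpace.proj i : E' →L[ℝ] ℝ) x *
        fderiv ℝ φ x (EuclideanSpace.single i 1)) := by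
    intro i
    apply Continuous.integrable_of_hasCompactSupport
    · exact ((EuclideanSpace.proj i : E' →L[ℝ] ℝ).continuous).mul
        (hfdc.clm_apply continuous_const)
    · apply HasCompactSupport.intro hφc
      intro x hx
      rw [hfd0 x hx]
      simp
  have key : ∀ x : E', fderiv ℝ φ x x =
      ∑ i : Fin m, (EuclideanSpace.proj i : E' →L[ℝ] ℝ) x *
        fderiv ℝ φ x (EuclideanSpace.single i 1) := by
    intro x
    have hx : x = ∑ i : Fin m, x i • EuclideanSpace.single i (1 : ℝ) := by
      conv_lhs => rw [← (EuclideanSpace.basisFun (Fin m) ℝ).sum_repr x]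
      exact Finset.sum_congr rfl fun i _ => by
        rw [EuclideanSpace.basisFun_apply, EuclideanSpace.basisFun_repr]
    have h1 : fderiv ℝ φ x x =
        fderiv ℝ φ x (∑ i : Fin m, x i • EuclideanSpace.single i (1 : ℝ)) :=
      congrArg _ hx
    rw [h1, map_sum]
    refine Finset.sum_congr rfl fun i _ => ?_
    rw [(fderiv ℝ φ x).map_smul]
    simp [smul_eq_mul]
  have hφint : Integrable φ := hφ.continuous.integrable_of_hasCompactSupport hφc
  calc ∫ x : E', fderiv ℝ φ x x
      = ∫ x : E', ∑ i : Fin m, (EuclideanSpace.proj i : E' →L[ℝ] ℝ) x *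
          fderiv ℝ φ x (EuclideanSpace.single i 1) :=
        integral_congr_ae (Filter.Eventually.of_forall key)
    _ = ∑ i : Fin m, ∫ x : E', (EuclideanSpace.proj i : E' →L[ℝ] ℝ) x *
          fderiv ℝ φ x (EuclideanSpace.single i 1) :=
        integral_finset_sum _ fun i _ => hint i
    _ = ∑ i : Fin m, -∫ x : E', φ x := by
        refine Finset.sum_congr rfl fun i _ => ?_
        have hpf : ∀ x : E', fderiv ℝ (fun y : E' => (EuclideanSpace.proj i : E' →L[ℝ] ℝ) y) x
            (EuclideanSpace.single i 1) = 1 := by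
          intro x
          rw [(EuclideanSpace.proj i : E' →L[ℝ] ℝ).fderiv]
          simp
        have := integral_mul_fderiv_eq_neg_fderiv_mul_of_integrable
          (μ := (volume : Measure E'))
          (f := fun y : E' => (EuclideanSpace.proj i : E' →L[ℝ] ℝ) y) (g := φ)
          (v := EuclideanSpace.single i 1)
          ?_ ?_ ?_ ?_ ?_
        · rw [this]
          congr 1
          refine integral_congr_ae (Filter.Eventually.of_forall fun x => ?_)
          simp only [hpf, one_mul]
        · refine (Integrable.congr hφint ?_)
          exact Filter.Eventually.of_forall fun x => by simp only [hpf, one_mul]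
        · exact hint i
        · apply Continuous.integrable_of_hasCompactSupport
          · exact (EuclideanSpace.proj i : E' →L[ℝ] ℝ).continuous.mul hφ.continuous
          · apply HasCompactSupport.intro hφc
            intro x hx
            rw [image_eq_zero_of_notMem_tsupport hx, mul_zero]
        · exact fun x _ => (EuclideanSpace.proj i : E' →L[ℝ] ℝ).differentiable x
        · exact fun x _ => hφd x
    _ = -(m : ℝ) * ∫ x : E', φ x := by
        rw [Finset.sum_const, Finset.card_univ, Fintype.card_fin, nsmul_eq_mul]
        ring

end Aux

/-- On the unit ball of `ℝⁿ`, for `ū(x) = (3/4)(2/n)^{1/3}(1 - ‖x‖^{4/3})` and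
`a(x) = (1/2)(2/n)^{2/3}|x|^{2/3}`, one has `a = |∇ū|²/2` away from the origin and
`-div(a ∇ū) = 1` in the sense of distributions on the ball. -/
theorem example_quadratic_cost_ball (n : ℕ) (hn : 0 < n) :
    let E := EuclideanSpace ℝ (Fin n)
    let Ω : Set (EuclideanSpace ℝ (Fin n)) := Metric.ball 0 1
    let u : EuclideanSpace ℝ (Fin n) → ℝ :=
      fun x => (3 / 4) * ((2 / n : ℝ) ^ ((1 : ℝ) / 3)) * (1 - ‖x‖ ^ ((4 : ℝ) / 3))
    let a : EuclideanSpace ℝ (Fin n) → ℝ :=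
      fun x => (1 / 2) * ((2 / n : ℝ) ^ ((2 : ℝ) / 3)) * ‖x‖ ^ ((2 : ℝ) / 3)
    (∀ x : EuclideanSpace ℝ (Fin n), x ≠ 0 → a x = ‖gradient u x‖ ^ 2 / 2) ∧
    (∀ φ : EuclideanSpace ℝ (Fin n) → ℝ, ContDiff ℝ (⊤ : ℕ∞) φ → HasCompactSupport φ →
      tsupport φ ⊆ Ω →
      ∫ x in Ω, a x * ⟪gradient u x, gradient φ x⟫ = ∫ x in Ω, φ x) := by
  intro E Ω u a
  set c : ℝ := (2 / n : ℝ) ^ ((1 : ℝ) / 3) with hc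
  have hc0 : (0 : ℝ) < 2 / n := by positivity
  have hcpos : 0 < c := Real.rpow_pos_of_pos hc0 _
  have hn0 : (n : ℝ) ≠ 0 := Nat.cast_ne_zero.2 hn.ne'
  have hc2 : c ^ 2 = (2 / n : ℝ) ^ ((2 : ℝ) / 3) := by
    rw [hc, ← Real.rpow_natCast ((2 / n : ℝ) ^ ((1 : ℝ) / 3)) 2,
      ← Real.rpow_mul hc0.le]
    norm_num
  have hgrad : ∀ x : EuclideanSpace ℝ (Fin n), x ≠ 0 →
      gradient u x = (-(c * ‖x‖ ^ (-(2 : ℝ) / 3))) • x := fun x hx =>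
    (aux_hasGradientAt c hx).gradient
  constructor
  · intro x hx
    have hxn : (0 : ℝ) < ‖x‖ := norm_pos_iff.2 hx
    rw [hgrad x hx, norm_smul]
    have habs : ‖(-(c * ‖x‖ ^ (-(2 : ℝ) / 3)))‖ = c * ‖x‖ ^ (-(2 : ℝ) / 3) := by
      rw [Real.norm_eq_abs, abs_neg, abs_of_nonneg]
      positivity
    rw [habs]
    have h1 : (‖x‖ ^ (-(2 : ℝ) / 3)) ^ (2 : ℕ) = ‖x‖ ^ (-(4 : ℝ) / 3) := by
      rw [← Real.rpow_natCast (‖x‖ ^ (-(2 : ℝ) / 3)) 2, ← Real.rpow_mul (norm_nonneg x)]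
      norm_num
    have h2 : ‖x‖ ^ (-(4 : ℝ) / 3) * ‖x‖ ^ (2 : ℕ) = ‖x‖ ^ ((2 : ℝ) / 3) := by
      rw [← Real.rpow_natCast ‖x‖ 2, ← Real.rpow_add hxn]
      norm_num
    have h3 : (c * ‖x‖ ^ (-(2 : ℝ) / 3) * ‖x‖) ^ (2 : ℕ) =
        (2 / n : ℝ) ^ ((2 : ℝ) / 3) * ‖x‖ ^ ((2 : ℝ) / 3) := by
      calc (c * ‖x‖ ^ (-(2 : ℝ) / 3) * ‖x‖) ^ (2 : ℕ)
          = c ^ (2 : ℕ) * ((‖x‖ ^ (-(2 : ℝ) / 3)) ^ (2 : ℕ) * ‖x‖ ^ (2 : ℕ)) := by ring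
        _ = (2 / n : ℝ) ^ ((2 : ℝ) / 3) * ‖x‖ ^ ((2 : ℝ) / 3) := by
            rw [h1, h2, hc2]
    show (1 / 2) * ((2 / n : ℝ) ^ ((2 : ℝ) / 3)) * ‖x‖ ^ ((2 : ℝ) / 3) =
      (c * ‖x‖ ^ (-(2 : ℝ) / 3) * ‖x‖) ^ (2 : ℕ) / 2
    rw [h3]
    ring
  · intro φ hφ hφc hφΩ
    have hφd : Differentiable ℝ φ := hφ.differentiable (by simp)
    have hkey : ∀ x : EuclideanSpace ℝ (Fin n),
        a x * ⟪gradient u x, gradient φ x⟫ = (-(1 : ℝ) / n) * fderiv ℝ φ x x := by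
      intro x
      rcases eq_or_ne x 0 with rfl | hx
      · have ha0 : a (0 : EuclideanSpace ℝ (Fin n)) = 0 := by
          show (1 / 2) * ((2 / n : ℝ) ^ ((2 : ℝ) / 3)) *
            ‖(0 : EuclideanSpace ℝ (Fin n))‖ ^ ((2 : ℝ) / 3) = 0
          rw [norm_zero, Real.zero_rpow (by norm_num)]
          ring
        rw [ha0, zero_mul, map_zero, mul_zero]
      · have hxn : (0 : ℝ) < ‖x‖ := norm_pos_iff.2 hx
        rw [hgrad x hx, real_inner_smul_left, real_inner_comm, aux_gradient_inner,
          ← mul_assoc]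
        have h3 : ‖x‖ ^ ((2 : ℝ) / 3) * ‖x‖ ^ (-(2 : ℝ) / 3) = 1 := by
          rw [← Real.rpow_add hxn]; norm_num
        have h4 : (2 / n : ℝ) ^ ((2 : ℝ) / 3) * (2 / n : ℝ) ^ ((1 : ℝ) / 3) = 2 / n := by
          rw [← Real.rpow_add hc0]; norm_num
        have hax : a x * -(c * ‖x‖ ^ (-(2 : ℝ) / 3)) = -(1 : ℝ) / n := by
          show ((1 / 2) * ((2 / n : ℝ) ^ ((2 : ℝ) / 3)) * ‖x‖ ^ ((2 : ℝ) / 3)) *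
            -(c * ‖x‖ ^ (-(2 : ℝ) / 3)) = -(1 : ℝ) / n
          calc ((1 / 2) * ((2 / n : ℝ) ^ ((2 : ℝ) / 3)) * ‖x‖ ^ ((2 : ℝ) / 3)) *
              -(c * ‖x‖ ^ (-(2 : ℝ) / 3))
              = -((1 / 2) * ((2 / n : ℝ) ^ ((2 : ℝ) / 3) * (2 / n : ℝ) ^ ((1 : ℝ) / 3)) *
                  (‖x‖ ^ ((2 : ℝ) / 3) * ‖x‖ ^ (-(2 : ℝ) / 3))) := by rw [hc]; ring
            _ = -((1 / 2) * (2 / n) * 1) := by rw [h3, h4]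
            _ = -(1 : ℝ) / n := by field_simp
        rw [hax]
    have hsupp_fderiv : ∀ x : EuclideanSpace ℝ (Fin n), x ∉ Ω → fderiv ℝ φ x = 0 := by
      intro x hx
      by_contra h
      exact hx (hφΩ (support_fderiv_subset ℝ (f := φ) h))
    have hL : ∫ x in Ω, a x * ⟪gradient u x, gradient φ x⟫ =
        ∫ x : EuclideanSpace ℝ (Fin n), (-(1 : ℝ) / n) * fderiv ℝ φ x x := by
      rw [setIntegral_congr_fun measurableSet_ball (fun x _ => hkey x)]
      apply setIntegral_eq_integral_of_forall_compl_eq_zero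
      intro x hx
      rw [hsupp_fderiv x hx]
      simp
    have hR : ∫ x in Ω, φ x = ∫ x : EuclideanSpace ℝ (Fin n), φ x := by
      apply setIntegral_eq_integral_of_forall_compl_eq_zero
      intro x hx
      exact image_eq_zero_of_notMem_tsupport (fun h => hx (hφΩ h))
    rw [hL, hR, integral_const_mul, aux_ibp φ hφ hφc]
    field_simp
end

section
/- Let K be a compact convex subset of a topological vector space V, C a convex subset of a vector space W, and L : K × C → ℝ a function such that L(v, ·) is convex on C for each v ∈ K and L(·, w) is concave and upper semicontinuous on K for each w ∈ C. Then sup_{v ∈ K} inf_{w ∈ C} L(v, w) = inf_{w ∈ C} sup_{v ∈ K} L(v, w). -/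
/-! If `sup inf < inf sup`, pick a real `c` strictly between. Every `v ∈ K` then has a `w ∈ C`
with `L v w < c`; these strict sublevel sets are relatively open in `K` by upper semicontinuity,
so compactness leaves finitely many `w₁, …, wₙ`. The points of `ℝⁿ` lying strictly below
`(L v wᵢ)ᵢ` for some `v ∈ K` form an open set, convex by concavity in `v`, that misses the orthant
`{x | ∀ i, c ≤ xᵢ}`. A separating functional has nonnegative weights `μᵢ`; normalised, they give
`∑ μᵢ L v wᵢ ≤ c` on `K`, so by convexity in `w` the point `∑ μᵢ wᵢ` bounds `L` by `c` on all of
`K`, contradicting `c < inf sup`. -/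

open Set Finset

lemma nonneg_of_forall_le_add_mul {𝕜 : Type*} [Field 𝕜] [LinearOrder 𝕜] [IsStrictOrderedRing 𝕜]
    {a b u : 𝕜} (h : ∀ t : 𝕜, 0 ≤ t → u ≤ a + t * b) : 0 ≤ b := by
  by_contra! hb
  have h₀ := h 0 le_rfl
  have hbig := h ((a - u + 1) / -b) (div_nonneg (by linarith) (by linarith))
  rw [div_mul_eq_mul_div, div_neg, mul_div_assoc, div_self hb.ne, mul_one] at hbig
  linarith

theorem exists_mem_stdSimplex_forall_sum_mul_lt {ι : Type*} [Fintype ι] {S : Set (ι → ℝ)}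
    (hSopen : IsOpen S) (hSconv : Convex ℝ S) (hSne : S.Nonempty) {c : ℝ}
    (hS : ∀ x ∈ S, ∃ i, x i < c) :
    ∃ μ ∈ stdSimplex ℝ ι, ∀ x ∈ S, ∑ i, μ i * x i < c := by
  classical
  have hdisj : Disjoint S (Ici fun _ => c) := by
    refine Set.disjoint_left.2 fun x hx hcx => ?_
    obtain ⟨i, hi⟩ := hS x hx
    exact (hcx i).not_gt hi
  obtain ⟨f, u, hfS, hfQ⟩ := geometric_hahn_banach_open hSconv hSopen (convex_Ici _) hdisj
  set e : ι → ι → ℝ := fun i j => if i = j then 1 else 0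
  set lam : ι → ℝ := fun i => f (e i)
  have hf : ∀ x, f x = ∑ i, lam i * x i := fun x => by
    simpa [mul_comm] using f.toLinearMap.pi_apply_eq_sum_univ x
  have hfc : u ≤ f fun _ => c := hfQ _ self_mem_Ici
  have hlam : ∀ i, 0 ≤ lam i := fun i => nonneg_of_forall_le_add_mul fun t ht => by
    have hmem : (fun _ => c) + t • e i ∈ Ici fun _ : ι => c := fun j => by
      by_cases hij : i = j <;> simp [e, hij, ht]
    have := hfQ _ hmem
    rwa [map_add, map_smul, smul_eq_mul] at this
  obtain ⟨x₀, hx₀⟩ := hSne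
  have hT : 0 < ∑ i, lam i := by
    refine (Finset.sum_nonneg fun i _ => hlam i).lt_of_ne fun hT => ?_
    have hzero := (Finset.sum_eq_zero_iff_of_nonneg fun i _ => hlam i).1 hT.symm
    have := hfS x₀ hx₀
    simp [hf, hzero] at this
    simp [hf, hzero] at hfc
    linarith
  refine ⟨fun i => lam i / ∑ j, lam j, ⟨fun i => div_nonneg (hlam i) hT.le, ?_⟩, fun x hx => ?_⟩
  · rw [← Finset.sum_div, div_self hT.ne']
  · have := hfS x hx
    simp_rw [div_mul_eq_mul_div, ← Finset.sum_div, div_lt_iff₀ hT, ← hf]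
    rw [hf] at hfc
    simpa [Finset.mul_sum, mul_comm] using this.trans_le hfc

section

variable {V W : Type*} [AddCommGroup V] [Module ℝ V] [AddCommGroup W] [Module ℝ W]
  {K : Set V} {C : Set W} {L : V → W → ℝ}

theorem exists_mem_forall_le_of_forall_exists_lt_fintype (hKconv : Convex ℝ K)
    (hKne : K.Nonempty) (hCconv : Convex ℝ C) (hconv : ∀ v ∈ K, ConvexOn ℝ C (L v))
    (hconc : ∀ w ∈ C, ConcaveOn ℝ K fun v => L v w)
    {ι : Type*} [Fintype ι] {ws : ι → W} (hws : ∀ i, ws i ∈ C) {c : ℝ}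
    (h : ∀ v ∈ K, ∃ i, L v (ws i) < c) :
    ∃ w ∈ C, ∀ v ∈ K, L v w ≤ c := by
  set S : Set (ι → ℝ) := ⋃ v ∈ K, univ.pi fun i => Iio (L v (ws i))
  have hS : ∀ x, x ∈ S ↔ ∃ v ∈ K, ∀ i, x i < L v (ws i) := by simp [S]
  have hSopen : IsOpen S :=
    isOpen_biUnion fun v _ => isOpen_set_pi finite_univ fun i _ => isOpen_Iio
  have hSconv : Convex ℝ S := by
    intro x hx y hy a b ha hb hab
    obtain ⟨v, hv, hxv⟩ := (hS x).1 hx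
    obtain ⟨u, hu, hyu⟩ := (hS y).1 hy
    refine (hS _).2 ⟨a • v + b • u, hKconv hv hu ha hb hab, fun i => ?_⟩
    calc (a • x + b • y) i = a * x i + b * y i := rfl
      _ < a * L v (ws i) + b * L u (ws i) := by
        rcases ha.eq_or_lt with rfl | ha
        · simp_all
        · nlinarith [hxv i, hyu i]
      _ ≤ L (a • v + b • u) (ws i) := (hconc _ (hws i)).2 hv hu ha hb hab
  obtain ⟨v₀, hv₀⟩ := hKne
  have hSne : S.Nonempty := ⟨fun i => L v₀ (ws i) - 1, (hS _).2 ⟨v₀, hv₀, fun i => by linarith⟩⟩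
  obtain ⟨μ, ⟨hμ₀, hμ₁⟩, hμS⟩ := exists_mem_stdSimplex_forall_sum_mul_lt hSopen hSconv hSne
    fun x hx => by
      obtain ⟨v, hv, hxv⟩ := (hS x).1 hx
      obtain ⟨i, hi⟩ := h v hv
      exact ⟨i, (hxv i).trans hi⟩
  refine ⟨∑ i, μ i • ws i, hCconv.sum_mem (fun i _ => hμ₀ i) hμ₁ fun i _ => hws i,
    fun v hv => ?_⟩
  have hsum : ∑ i, μ i * L v (ws i) ≤ c := le_of_forall_pos_lt_add fun ε hε => by
    have := hμS (fun i => L v (ws i) - ε) ((hS _).2 ⟨v, hv, fun i => by linarith⟩)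
    simp only [mul_sub, Finset.sum_sub_distrib, ← Finset.sum_mul, hμ₁, one_mul] at this
    linarith
  exact ((hconv v hv).map_sum_le (fun i _ => hμ₀ i) hμ₁ fun i _ => hws i).trans hsum

theorem exists_mem_forall_le_of_forall_exists_lt [TopologicalSpace V] (hKc : IsCompact K)
    (hKconv : Convex ℝ K) (hCconv : Convex ℝ C) (hconv : ∀ v ∈ K, ConvexOn ℝ C (L v))
    (hconc : ∀ w ∈ C, ConcaveOn ℝ K fun v => L v w)
    (husc : ∀ w ∈ C, UpperSemicontinuousOn (fun v => L v w) K) (hKne : K.Nonempty) {c : ℝ}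
    (h : ∀ v ∈ K, ∃ w ∈ C, L v w < c) :
    ∃ w ∈ C, ∀ v ∈ K, L v w ≤ c := by
  obtain ⟨t, ht⟩ :=
    (UpperSemicontinuousOn.inter_biInter_preimage_Ici_eq_empty_iff_exists_finset hKc husc (c := c)).1 <| by
      refine eq_empty_iff_forall_notMem.2 fun v ⟨hv, hvc⟩ => ?_
      obtain ⟨w, hw, hlt⟩ := h v hv
      exact (mem_iInter₂.1 hvc w hw).not_gt hlt
  exact exists_mem_forall_le_of_forall_exists_lt_fintype hKconv hKne hCconv hconv hconc
    (ws := fun i : t => i.1.1) (fun i => i.1.2) fun v hv => by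
      obtain ⟨w, hw, hlt⟩ := ht v hv
      exact ⟨⟨w, hw⟩, hlt⟩

end

theorem minimax_concave_convex_general
    (V W : Type*) [AddCommGroup V] [Module ℝ V] [TopologicalSpace V]
    [AddCommGroup W] [Module ℝ W]
    (K : Set V) (hKc : IsCompact K) (hKconv : Convex ℝ K) (hKne : K.Nonempty)
    (C : Set W) (hCconv : Convex ℝ C)
    (L : V → W → ℝ)
    (hconv : ∀ v ∈ K, ConvexOn ℝ C (L v))
    (hconc : ∀ w ∈ C, ConcaveOn ℝ K (fun v => L v w))
    (husc : ∀ w ∈ C, UpperSemicontinuousOn (fun v => L v w) K) :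
    (⨆ v : K, ⨅ w : C, ((L v w : ℝ) : EReal))
      = ⨅ w : C, ⨆ v : K, ((L v w : ℝ) : EReal) := by
  refine le_antisymm (iSup_iInf_le_iInf_iSup _) ?_
  by_contra! hlt
  obtain ⟨c, hsup, hinf⟩ := EReal.exists_between_coe_real hlt
  have hlow : ∀ v ∈ K, ∃ w ∈ C, L v w < c := fun v hv => by
    obtain ⟨w, hw⟩ := iInf_lt_iff.1 ((le_iSup_of_le (ι := K) ⟨v, hv⟩ le_rfl).trans_lt hsup)
    exact ⟨w, w.2, EReal.coe_lt_coe_iff.1 hw⟩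
  obtain ⟨w, hw, hle⟩ := exists_mem_forall_le_of_forall_exists_lt hKc hKconv hCconv hconv hconc
    husc hKne hlow
  refine hinf.not_ge (iInf_le_of_le ⟨w, hw⟩ (iSup_le fun v => ?_))
  exact EReal.coe_le_coe_iff.2 (hle v v.2)

/-- Minimax theorem: if `K` is compact convex, `C` convex, `L(v,·)` convex and
`L(·,w)` concave and upper semicontinuous, then `sup inf = inf sup`. -/
theorem minimax_concave_convex
    (V W : Type*) [AddCommGroup V] [Module ℝ V] [TopologicalSpace V]
    [AddCommGroup W] [Module ℝ W]
    (K : Set V) (hKc : IsCompact K) (hKconv : Convex ℝ K) (hKne : K.Nonempty)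
    (C : Set W) (hCconv : Convex ℝ C) (hCne : C.Nonempty)
    (L : V → W → ℝ)
    (hconv : ∀ v ∈ K, ConvexOn ℝ C (L v))
    (hconc : ∀ w ∈ C, ConcaveOn ℝ K (fun v => L v w))
    (husc : ∀ w ∈ C, UpperSemicontinuousOn (fun v => L v w) K) :
    (⨆ v : K, ⨅ w : C, ((L v w : ℝ) : EReal))
      = ⨅ w : C, ⨆ v : K, ((L v w : ℝ) : EReal) :=
  minimax_concave_convex_general V W K hKc hKconv hKne C hCconv L hconv hconc husc
end
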